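/- arXiv:1207.0121 — 8 statements merged into one kernel-verified Lean document; each statement's English description precedes it below -/
import Mathlib

section
/- Let A : S → Set be a functor on the category S of finite sets and surjections. Define Â(X) = Σ_{n} [X over n] ⊗_{S_n} A(n), where [X over n] is the set of injections Fin n → X and S_n acts on injections by precomposition and on A(n) via its action as automorphisms in S. Then Â extends to a functor Set → Set: for f : X → Y and a class [x⃗, a] with x⃗ : Fin n → X injective, taking the epi-mono factorization f ∘ x⃗ = y⃗ ∘ α (α a surjection, y⃗ an injection) and setting Â(f)([x⃗, a]) = [y⃗, A(α)(a)] is well defined and functorial. -/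
/-- A functor from the skeleton `S` of finite sets and surjections to `Set`:
a family of sets with a functorial action of surjections. -/
structure SFunctor where
  obj : ℕ → Type
  map : ∀ {n m : ℕ} (f : Fin n → Fin m), Function.Surjective f → obj n → obj m
  map_id : ∀ {n : ℕ} (a : obj n), map id Function.surjective_id a = a
  map_map : ∀ {n m k : ℕ} (f : Fin n → Fin m) (hf : Function.Surjective f)
      (g : Fin m → Fin k) (hg : Function.Surjective g) (a : obj n),
      map g hg (map f hf a) = map (g ∘ f) (hg.comp hf) a

/-- The relation identifying `(x⃗ ∘ σ, a)` with `(x⃗, σ · a)` for bijections `σ`,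
on pairs of an injection `Fin n → X` and an element of `A(n)`. -/
def HatRel (A : SFunctor) (X : Type) :
    (Σ n : ℕ, {x : Fin n → X // Function.Injective x} × A.obj n) →
    (Σ n : ℕ, {x : Fin n → X // Function.Injective x} × A.obj n) → Prop :=
  fun p q => ∃ e : Fin p.1 ≃ Fin q.1,
    (∀ i, q.2.1.1 (e i) = p.2.1.1 i) ∧ A.map e e.surjective p.2.2 = q.2.2

/-- `Â(X) = Σ_n [X over n] ⊗_{S_n} A(n)`. -/
def HatA (A : SFunctor) (X : Type) : Type := Quot (HatRel A X)

/-- The class `[x⃗, a]` in `Â(X)`. -/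
def hatMk (A : SFunctor) {X : Type} {n : ℕ} (x : Fin n → X) (hx : Function.Injective x)
    (a : A.obj n) : HatA A X :=
  Quot.mk _ ⟨n, ⟨x, hx⟩, a⟩

/-- The characterizing property of the action of `Â` on functions:
`Â(f)([x⃗,a]) = [y⃗, A(α)(a)]` whenever `f ∘ x⃗ = y⃗ ∘ α` is an epi-mono factorization. -/
def HatMapSpec (A : SFunctor)
    (F : ∀ (X Y : Type), (X → Y) → HatA A X → HatA A Y) : Prop :=
  ∀ (X Y : Type) (f : X → Y) (n m : ℕ) (x : Fin n → X) (hx : Function.Injective x)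
    (a : A.obj n) (α : Fin n → Fin m) (hα : Function.Surjective α)
    (y : Fin m → Y) (hy : Function.Injective y),
    (∀ i, f (x i) = y (α i)) →
    F X Y f (hatMk A x hx a) = hatMk A y hy (A.map α hα a)

/-- A commutative square of sets which is a pullback (elementwise formulation). -/
def IsSetPullback {P A B C : Type} (pa : P → A) (pb : P → B) (f : A → C) (g : B → C) : Prop :=
  (∀ p, f (pa p) = g (pb p)) ∧ ∀ a b, f a = g b → ∃! p, pa p = a ∧ pb p = b

/-- A commutative square of sets which is a weak pullback (elementwise formulation). -/
def IsWeakSetPullback {P A B C : Type} (pa : P → A) (pb : P → B) (f : A → C) (g : B → C) : Prop :=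
  (∀ p, f (pa p) = g (pb p)) ∧ ∀ a b, f a = g b → ∃ p, pa p = a ∧ pb p = b

/-- Naturality of a family `τ n : A(n) → B(n)` with respect to surjections. -/
def SNatTrans (A B : SFunctor) (τ : ∀ n, A.obj n → B.obj n) : Prop :=
  ∀ (n m : ℕ) (f : Fin n → Fin m) (hf : Function.Surjective f) (a : A.obj n),
    τ m (A.map f hf a) = B.map f hf (τ n a)

/-- The characterizing property of `τ̂ : Â → B̂`, namely `τ̂_X([x⃗,a]) = [x⃗, τ(a)]`. -/
def HatTransSpec (A B : SFunctor) (τ : ∀ n, A.obj n → B.obj n)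
    (t : ∀ X : Type, HatA A X → HatA B X) : Prop :=
  ∀ (X : Type) (n : ℕ) (x : Fin n → X) (hx : Function.Injective x) (a : A.obj n),
    t X (hatMk A x hx a) = hatMk B x hx (τ n a)

lemma SFunctor.map_congr (A : SFunctor) {n m : ℕ} {f f' : Fin n → Fin m}
    (h : f = f') (hf : Function.Surjective f) (hf' : Function.Surjective f')
    (a : A.obj n) : A.map f hf a = A.map f' hf' a := by subst h; rfl

/-- Two epi-mono factorizations of the same map give the same class. -/
lemma hatMk_key (A : SFunctor) {Y : Type} {n m m' : ℕ} (g : Fin n → Y)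
    (α : Fin n → Fin m) (hα : Function.Surjective α)
    (y : Fin m → Y) (hy : Function.Injective y)
    (α' : Fin n → Fin m') (hα' : Function.Surjective α')
    (y' : Fin m' → Y) (hy' : Function.Injective y')
    (hc : ∀ i, y (α i) = g i) (hc' : ∀ i, y' (α' i) = g i) (a : A.obj n) :
    hatMk A y hy (A.map α hα a) = hatMk A y' hy' (A.map α' hα' a) := by
  obtain ⟨s, hs⟩ := hα.hasRightInverse
  have hys : ∀ j, y' (α' (s j)) = y j := fun j => by
    rw [hc' (s j), ← hc (s j), hs j]
  have hinj : Function.Injective (fun j => α' (s j)) := by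
    intro j j' h
    apply hy
    rw [← hys j, ← hys j']
    simp only at h
    rw [h]
  have hsurj : Function.Surjective (fun j => α' (s j)) := by
    intro k
    obtain ⟨i, hi⟩ := hα' k
    refine ⟨α i, hy' ?_⟩
    show y' (α' (s (α i))) = y' k
    rw [hys (α i), hc i, ← hi, hc' i]
  let e : Fin m ≃ Fin m' := Equiv.ofBijective _ ⟨hinj, hsurj⟩
  have he : ∀ j, e j = α' (s j) := fun j => rfl
  have heα : ⇑e ∘ α = α' := by
    funext i
    apply hy'
    show y' (e (α i)) = y' (α' i)
    rw [he, hys (α i), hc i, hc' i]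
  apply Quot.sound
  refine ⟨e, fun j => ?_, ?_⟩
  · show y' (e j) = y j
    rw [he, hys]
  · rw [A.map_map]
    exact A.map_congr heα _ hα' a

/-- A chosen epi-mono factorization. -/
structure EMFact {n : ℕ} {Y : Type} (g : Fin n → Y) where
  m : ℕ
  α : Fin n → Fin m
  y : Fin m → Y
  hα : Function.Surjective α
  hy : Function.Injective y
  comm : ∀ i, y (α i) = g i

noncomputable def getFact {n : ℕ} {Y : Type} (g : Fin n → Y) : EMFact g := by
  classical
  haveI : Fintype (Set.range g) := (Set.finite_range g).fintype
  let e : Set.range g ≃ Fin (Fintype.card (Set.range g)) := Fintype.equivFin _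
  refine ⟨Fintype.card (Set.range g),
    fun i => e ⟨g i, Set.mem_range_self i⟩,
    fun j => (e.symm j).1, ?_, ?_, ?_⟩
  · intro j
    obtain ⟨i, hi⟩ := (e.symm j).2
    refine ⟨i, ?_⟩
    have h2 : (⟨g i, Set.mem_range_self i⟩ : Set.range g) = e.symm j := Subtype.ext hi
    show e ⟨g i, Set.mem_range_self i⟩ = j
    rw [h2, e.apply_symm_apply]
  · intro j j' h
    exact e.symm.injective (Subtype.ext h)
  · intro i
    simp

noncomputable def hatMap (A : SFunctor) {X Y : Type} (f : X → Y) :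
    HatA A X → HatA A Y :=
  Quot.lift
    (fun p => hatMk A (getFact (fun i => f (p.2.1.1 i))).y
      (getFact (fun i => f (p.2.1.1 i))).hy
      (A.map (getFact (fun i => f (p.2.1.1 i))).α
        (getFact (fun i => f (p.2.1.1 i))).hα p.2.2))
    (by
      rintro ⟨n, ⟨x, hx⟩, a⟩ ⟨n', ⟨x', hx'⟩, a'⟩ ⟨e, he, ha⟩
      simp only at he ha ⊢
      obtain ⟨m, α, y, hα, hy, hcomm⟩ := getFact (fun i => f (x i))
      obtain ⟨m', α', y', hα', hy', hcomm'⟩ := getFact (fun i => f (x' i))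
      simp only
      have h1 : hatMk A y hy (A.map α hα a)
          = hatMk A y' hy' (A.map (α' ∘ ⇑e) (hα'.comp e.surjective) a) := by
        apply hatMk_key A (fun i => f (x i)) α hα y hy _ _ y' hy' hcomm
        intro i
        show y' (α' (e i)) = f (x i)
        rw [hcomm' (e i), he i]
      rw [h1]
      congr 1
      rw [← A.map_map _ e.surjective _ hα', ha])

lemma hatMap_spec (A : SFunctor) (X Y : Type) (f : X → Y) (n m : ℕ)
    (x : Fin n → X) (hx : Function.Injective x)
    (a : A.obj n) (α : Fin n → Fin m) (hα : Function.Surjective α)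
    (y : Fin m → Y) (hy : Function.Injective y)
    (hcomm : ∀ i, f (x i) = y (α i)) :
    hatMap A f (hatMk A x hx a) = hatMk A y hy (A.map α hα a) := by
  show hatMk A (getFact (fun i => f (x i))).y _ (A.map _ _ a) = _
  exact hatMk_key A (fun i => f (x i)) _ _ _ _ α hα y hy
    (getFact (fun i => f (x i))).comm (fun i => (hcomm i).symm) a

/-- For a functor `A : S → Set`, the formula
`Â(f)([x⃗,a]) = [y⃗, A(α)(a)]` (via the epi-mono factorization `f ∘ x⃗ = y⃗ ∘ α`)
is well defined and yields a functorial action of `Â` on all functions. -/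
theorem hat_extends_to_functor (A : SFunctor) :
    ∃ F : ∀ (X Y : Type), (X → Y) → HatA A X → HatA A Y,
      HatMapSpec A F ∧
      (∀ (X : Type) (v : HatA A X), F X X id v = v) ∧
      (∀ (X Y Z : Type) (f : X → Y) (g : Y → Z) (v : HatA A X),
        F Y Z g (F X Y f v) = F X Z (g ∘ f) v) := by
  refine ⟨fun X Y f => hatMap A f, hatMap_spec A, ?_, ?_⟩
  · intro X v
    induction v using Quot.ind with
    | _ p =>
      obtain ⟨n, ⟨x, hx⟩, a⟩ := p
      have h : hatMap A id (hatMk A x hx a)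
          = hatMk A x hx (A.map id Function.surjective_id a) :=
        hatMap_spec A X X id n n x hx a id Function.surjective_id x hx (fun i => rfl)
      show hatMap A id (hatMk A x hx a) = hatMk A x hx a
      rw [h, A.map_id]
  · intro X Y Z f g v
    induction v using Quot.ind with
    | _ p =>
      obtain ⟨n, ⟨x, hx⟩, a⟩ := p
      show hatMap A g (hatMap A f (hatMk A x hx a)) = hatMap A (g ∘ f) (hatMk A x hx a)
      obtain ⟨m, α, y, hα, hy, hc⟩ := getFact (fun i => f (x i))
      obtain ⟨k, β, z, hβ, hz, hc'⟩ := getFact (fun j => g (y j))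
      have h1 : hatMap A f (hatMk A x hx a) = hatMk A y hy (A.map α hα a) :=
        hatMap_spec A X Y f n m x hx a α hα y hy (fun i => (hc i).symm)
      have h2 : hatMap A g (hatMk A y hy (A.map α hα a))
          = hatMk A z hz (A.map β hβ (A.map α hα a)) :=
        hatMap_spec A Y Z g m k y hy (A.map α hα a) β hβ z hz (fun j => (hc' j).symm)
      have h3 : hatMap A (g ∘ f) (hatMk A x hx a)
          = hatMk A z hz (A.map (β ∘ α) (hβ.comp hα) a) :=
        hatMap_spec A X Z (g ∘ f) n k x hx a (β ∘ α) (hβ.comp hα) z hz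
          (fun i => by show g (f (x i)) = z (β (α i)); rw [← hc i]; exact (hc' (α i)).symm)
      rw [h1, h2, h3, A.map_map]
end

section
/- Every equivalence class in the coend ∫^{n ∈ S} X^n × A(n), for A : S → Set, contains a minimal representative (x⃗, a) with x⃗ injective, and any two minimal representatives of the same class differ by a bijection: if (x⃗, a) and (x⃗', a') are both minimal and equivalent, there is a bijection σ with x⃗' ∘ σ = x⃗ and A(σ)(a') = a. -/
/-- The relation `(y⃗ ∘ φ, a) ∼ (y⃗, φ·a)` for surjections `φ`, generating the coend
`∫^{n∈S} X^n × A(n)`. -/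
def CoendRel (A : SFunctor) (X : Type) :
    (Σ n : ℕ, (Fin n → X) × A.obj n) → (Σ n : ℕ, (Fin n → X) × A.obj n) → Prop :=
  fun p q => ∃ (φ : Fin p.1 → Fin q.1) (hφ : Function.Surjective φ),
    (∀ i, p.2.1 i = q.2.1 (φ i)) ∧ A.map φ hφ p.2.2 = q.2.2

/-- The coend `∫^{n∈S} X^n × A(n)`, i.e. the value of the left Kan extension of `A`
along the inclusion `S → Set` at `X`. -/
def Coend (A : SFunctor) (X : Type) : Type := Quot (CoendRel A X)

/-- The class of `(x⃗, a)` in the coend. -/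
def coendMk (A : SFunctor) {X : Type} {n : ℕ} (x : Fin n → X) (a : A.obj n) : Coend A X :=
  Quot.mk _ ⟨n, x, a⟩

/-- The functorial action of the left Kan extension: `(x⃗, a) ↦ (f ∘ x⃗, a)`. -/
def coendMap (A : SFunctor) {X Y : Type} (f : X → Y) : Coend A X → Coend A Y :=
  Quot.lift (fun p => coendMk A (fun i => f (p.2.1 i)) p.2.2)
    (by
      rintro ⟨n, x, a⟩ ⟨m, y, b⟩ ⟨φ, hφ, h1, h2⟩
      exact Quot.sound ⟨φ, hφ, fun i => by exact congrArg f (h1 i), h2⟩)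

/-! A minimal representative comes from the epi-mono factorization of the tuple. For uniqueness,
fix `(y⃗, c)` with `y⃗` injective. By the diagonal fill-in of a surjection against an injection,
the property "`(x⃗, a)` is related to `(y⃗, c)` by a single surjection" is invariant under the
generating relation in both directions, so it holds throughout the class of `(y⃗, c)`; and a
surjection between two injective tuples is a bijection. -/

namespace SFunctor

variable (A : SFunctor)

theorem map_congr_s5 {n m : ℕ} {f g : Fin n → Fin m} (hf : Function.Surjective f)
    (hg : Function.Surjective g) (h : f = g) (a : A.obj n) :
    A.map f hf a = A.map g hg a := by
  subst h
  rfl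

theorem map_symm_map {n m : ℕ} (e : Fin n ≃ Fin m) (a : A.obj n) :
    A.map e.symm e.symm.surjective (A.map e e.surjective a) = a := by
  rw [A.map_map, A.map_congr_s5 _ Function.surjective_id e.symm_comp_self, A.map_id]

end SFunctor

theorem Function.Surjective.exists_comp_eq_of_injective {α β γ X : Type*} {ψ : α → β}
    (hψ : ψ.Surjective) {φ : α → γ} {y : γ → X} (hy : y.Injective) {z : β → X}
    (h : ∀ a, y (φ a) = z (ψ a)) : ∃ χ : β → γ, (∀ a, χ (ψ a) = φ a) ∧ ∀ b, y (χ b) = z b := by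
  have hχ : ∀ b, y (φ (Function.surjInv hψ b)) = z b := fun b => by
    rw [h, Function.surjInv_eq hψ]
  exact ⟨φ ∘ Function.surjInv hψ, fun a => hy (by rw [Function.comp_apply, hχ, h]), hχ⟩

theorem Finite.exists_surjective_fin_injective_factorization {α X : Type*} [Finite α]
    (x : α → X) : ∃ (m : ℕ) (φ : α → Fin m) (y : Fin m → X),
      φ.Surjective ∧ y.Injective ∧ ∀ a, x a = y (φ a) := by
  obtain ⟨m, ⟨e⟩⟩ := Finite.exists_equiv_fin (Set.range x)
  exact ⟨m, e ∘ Set.rangeFactorization x, Subtype.val ∘ e.symm,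
    e.surjective.comp Set.rangeFactorization_surjective,
    Subtype.val_injective.comp e.symm.injective, fun a => by simp [Set.rangeFactorization_coe]⟩

namespace CoendRel

variable {A : SFunctor} {X : Type}

theorem refl (p : Σ n : ℕ, (Fin n → X) × A.obj n) : CoendRel A X p p :=
  ⟨id, Function.surjective_id, fun _ => rfl, A.map_id _⟩

theorem trans {p q r : Σ n : ℕ, (Fin n → X) × A.obj n}
    (hpq : CoendRel A X p q) (hqr : CoendRel A X q r) : CoendRel A X p r := by
  obtain ⟨ψ, hψ, hx, ha⟩ := hpq
  obtain ⟨χ, hχ, hy, hb⟩ := hqr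
  exact ⟨χ ∘ ψ, hχ.comp hψ, fun i => (hx i).trans (hy (ψ i)), by rw [← hb, ← ha, A.map_map]⟩

theorem descend {p q t : Σ n : ℕ, (Fin n → X) × A.obj n} (ht : Function.Injective t.2.1)
    (hpq : CoendRel A X p q) (hpt : CoendRel A X p t) : CoendRel A X q t := by
  obtain ⟨ψ, hψ, hx, ha⟩ := hpq
  obtain ⟨φ, hφ, hx', hc⟩ := hpt
  obtain ⟨χ, hχψ, hχ⟩ := hψ.exists_comp_eq_of_injective ht fun i => (hx' i).symm.trans (hx i)
  have hχφ : χ ∘ ψ = φ := funext hχψ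
  have hχs : Function.Surjective χ := Function.Surjective.of_comp (hχφ ▸ hφ)
  refine ⟨χ, hχs, fun j => (hχ j).symm, ?_⟩
  rw [← ha, A.map_map, A.map_congr_s5 _ hφ hχφ, hc]

theorem of_mk_eq_mk {p t : Σ n : ℕ, (Fin n → X) × A.obj n} (ht : Function.Injective t.2.1)
    (h : Quot.mk (CoendRel A X) p = Quot.mk (CoendRel A X) t) : CoendRel A X p t := by
  have hlift : CoendRel A X p t = CoendRel A X t t := congrArg (Quot.lift (CoendRel A X · t)
    fun _ _ hrs => propext ⟨fun hr => descend ht hrs hr, hrs.trans⟩) h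
  exact hlift.mpr (refl t)

theorem exists_equiv_of_injective {p q : Σ n : ℕ, (Fin n → X) × A.obj n}
    (hp : Function.Injective p.2.1) (hpq : CoendRel A X p q) :
    ∃ e : Fin p.1 ≃ Fin q.1, (∀ i, q.2.1 (e i) = p.2.1 i) ∧ A.map e e.surjective p.2.2 = q.2.2 := by
  obtain ⟨φ, hφ, hx, ha⟩ := hpq
  have hφi : Function.Injective φ := fun i j hij => hp (by rw [hx, hx j, hij])
  exact ⟨Equiv.ofBijective φ ⟨hφi, hφ⟩, fun i => (hx i).symm, ha⟩

end CoendRel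

/-- Every class in the coend `∫^{n∈S} X^n × A(n)` has a minimal
(injective) representative, and any two minimal representatives of the same class
differ by a bijection acting simultaneously on the tuple and the coefficient. -/
theorem coend_minimal_representatives (A : SFunctor) (X : Type) :
    (∀ p : Σ n : ℕ, (Fin n → X) × A.obj n,
      ∃ q : Σ n : ℕ, (Fin n → X) × A.obj n,
        Function.Injective q.2.1 ∧
        Quot.mk (CoendRel A X) p = Quot.mk (CoendRel A X) q) ∧
    (∀ p q : Σ n : ℕ, (Fin n → X) × A.obj n,
      Function.Injective p.2.1 → Function.Injective q.2.1 →
      Quot.mk (CoendRel A X) p = Quot.mk (CoendRel A X) q →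
      ∃ e : Fin p.1 ≃ Fin q.1,
        (∀ i, q.2.1 (e i) = p.2.1 i) ∧
        A.map e.symm e.symm.surjective q.2.2 = p.2.2) := by
  constructor
  · rintro ⟨n, x, a⟩
    obtain ⟨m, φ, y, hφ, hy, hx⟩ := Finite.exists_surjective_fin_injective_factorization x
    exact ⟨⟨m, y, A.map φ hφ a⟩, hy, Quot.sound ⟨φ, hφ, hx, rfl⟩⟩
  · intro p q hp hq h
    obtain ⟨e, hx, ha⟩ := (CoendRel.of_mk_eq_mk hq h).exists_equiv_of_injective hp
    exact ⟨e, hx, by rw [← ha, A.map_symm_map]⟩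
end

section
/- The assignment A ↦ Â from functors S → Set to endofunctors of Set is faithful: if τ, τ' : A → B are natural transformations with τ̂ = τ̂', then τ = τ'. -/
/-- Extraction: read off the `B.obj n`-component of a class `[x⃗, b]` in `B̂(Fin n)`
when `x⃗` is bijective. -/
def hatExtract (B : SFunctor) (n : ℕ) : HatA B (Fin n) → Option (B.obj n) :=
  Quot.lift
    (fun p => if h : Function.Bijective p.2.1.1 then some (B.map p.2.1.1 h.surjective p.2.2)
      else none)
    (by
      rintro ⟨m, ⟨x, hx⟩, b⟩ ⟨m', ⟨x', hx'⟩, b'⟩ ⟨e, he, hb⟩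
      dsimp at *
      by_cases hbij : Function.Bijective x
      · have hbij' : Function.Bijective x' := by
          constructor
          · exact hx'
          · intro i
            obtain ⟨j, hj⟩ := hbij.surjective i
            exact ⟨e j, by rw [he, hj]⟩
        rw [dif_pos hbij, dif_pos hbij']
        congr 1
        rw [← hb, B.map_map]
        have : x' ∘ (e : Fin m ≃ Fin m') = x := funext he
        simp only [this]
      · have hbij' : ¬ Function.Bijective x' := by
          intro hbij'
          apply hbij
          constructor
          · exact hx
          · intro i
            obtain ⟨j, hj⟩ := hbij'.surjective i
            exact ⟨e.symm j, by rw [← he (e.symm j), e.apply_symm_apply, hj]⟩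
        rw [dif_neg hbij, dif_neg hbij'])

/-- The assignment `A ↦ Â` is faithful: if `τ̂ = τ̂'` then `τ = τ'`. -/
theorem hat_faithful (A B : SFunctor)
    (τ τ' : ∀ n, A.obj n → B.obj n) (hτ : SNatTrans A B τ) (hτ' : SNatTrans A B τ')
    (t t' : ∀ X : Type, HatA A X → HatA B X)
    (ht : HatTransSpec A B τ t) (ht' : HatTransSpec A B τ' t')
    (h : ∀ (X : Type) (v : HatA A X), t X v = t' X v) :
    ∀ (n : ℕ) (a : A.obj n), τ n a = τ' n a := by
  intro n a
  have key : hatMk B (id : Fin n → Fin n) Function.injective_id (τ n a)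
      = hatMk B (id : Fin n → Fin n) Function.injective_id (τ' n a) := by
    rw [← ht (Fin n) n id Function.injective_id a, ← ht' (Fin n) n id Function.injective_id a]
    exact h (Fin n) _
  have := congrArg (hatExtract B n) key
  simp only [hatMk, hatExtract, Quot.lift_mk, dif_pos Function.bijective_id] at this
  rw [B.map_id, B.map_id] at this
  exact Option.some.inj this
end

section
/- The functor A ↦ Â is full on semi-cartesian transformations: for functors A, B : S → Set, every semi-cartesian natural transformation ψ : Â → B̂ is of the form τ̂ for a (unique) natural transformation τ : A → B. -/
lemma map_id' (A : SFunctor) {n : ℕ} (f : Fin n → Fin n) (hf : Function.Surjective f)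
    (h : ∀ i, f i = i) (a : A.obj n) : A.map f hf a = a := by
  have hfe : f = id := funext h
  subst hfe
  exact A.map_id a

lemma hatRel_equiv (A : SFunctor) (X : Type) : Equivalence (HatRel A X) := by
  constructor
  · rintro ⟨n, ⟨x, hx⟩, a⟩
    exact ⟨Equiv.refl _, fun i => rfl, A.map_id a⟩
  · rintro ⟨n, ⟨x, hx⟩, a⟩ ⟨m, ⟨y, hy⟩, b⟩ ⟨e, he, hm⟩
    refine ⟨e.symm, fun i => ?_, ?_⟩
    · have := he (e.symm i)
      simpa using this.symm
    · rw [← hm, A.map_map]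
      exact map_id' A _ _ (fun i => e.symm_apply_apply i) a
  · rintro ⟨n, ⟨x, hx⟩, a⟩ ⟨m, ⟨y, hy⟩, b⟩ ⟨k, ⟨z, hz⟩, c⟩ ⟨e, he, hm⟩ ⟨e', he', hm'⟩
    refine ⟨e.trans e', fun i => ?_, ?_⟩
    · simpa using (he' (e i)).trans (he i)
    · rw [← hm', ← hm, A.map_map]
      rfl

lemma hat_exact (A : SFunctor) {X : Type} {p q}
    (h : Quot.mk (HatRel A X) p = Quot.mk (HatRel A X) q) : HatRel A X p q :=
  ((hatRel_equiv A X).eqvGen_iff).mp (Quot.eq.mp h)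

lemma hatMk_id_inj (B : SFunctor) {n : ℕ} {c c' : B.obj n}
    (h : hatMk B id Function.injective_id c = hatMk B id Function.injective_id c') :
    c = c' := by
  obtain ⟨e, he, hm⟩ := hat_exact B h
  exact (map_id' B (⇑e) e.surjective (fun i => he i) c).symm.trans hm

/-- The assignment `A ↦ Â` is full on semi-cartesian transformations:
every semi-cartesian natural transformation `ψ : Â → B̂` is `τ̂` for a unique
natural transformation `τ : A → B`. -/
theorem hat_full_on_semicartesian (A B : SFunctor)
    (FA : ∀ (X Y : Type), (X → Y) → HatA A X → HatA A Y) (hFA : HatMapSpec A FA)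
    (FB : ∀ (X Y : Type), (X → Y) → HatA B X → HatA B Y) (hFB : HatMapSpec B FB)
    (ψ : ∀ X : Type, HatA A X → HatA B X)
    (hnat : ∀ (X Y : Type) (f : X → Y) (v : HatA A X),
      FB X Y f (ψ X v) = ψ Y (FA X Y f v))
    (hsc : ∀ (X Y : Type) (f : X → Y), Function.Injective f →
      IsSetPullback (ψ X) (FA X Y f) (FB X Y f) (ψ Y)) :
    ∃! τ : ∀ n, A.obj n → B.obj n,
      SNatTrans A B τ ∧ HatTransSpec A B τ ψ := by
  have keyC : ∀ (n : ℕ) (a : A.obj n), ∃ c : B.obj n,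
      ψ (Fin n) (hatMk A id Function.injective_id a)
        = hatMk B id Function.injective_id c := by
    intro n a
    obtain ⟨⟨m, ⟨y, hy⟩, b⟩, hq⟩ :=
      Quot.exists_rep (ψ (Fin n) (hatMk A id Function.injective_id a))
    obtain ⟨hcomm, hpb⟩ := hsc (Fin m) (Fin n) y hy
    have h1 : FB (Fin m) (Fin n) y (hatMk B id Function.injective_id b)
        = hatMk B y hy b := by
      rw [hFB (Fin m) (Fin n) y m m id Function.injective_id b id
        Function.surjective_id y hy (fun i => rfl), B.map_id]
    have h2 : FB (Fin m) (Fin n) y (hatMk B id Function.injective_id b)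
        = ψ (Fin n) (hatMk A id Function.injective_id a) := by
      rw [h1]; exact hq
    obtain ⟨p, ⟨hp1, hp2⟩, -⟩ := hpb _ _ h2
    obtain ⟨⟨k, ⟨x, hx⟩, a'⟩, hp⟩ := Quot.exists_rep p
    subst hp
    have h3 : FA (Fin m) (Fin n) y (hatMk A x hx a')
        = hatMk A (y ∘ x) (hy.comp hx) a' := by
      rw [hFA (Fin m) (Fin n) y k k x hx a' id Function.surjective_id (y ∘ x)
        (hy.comp hx) (fun i => rfl), A.map_id]
    have h4 : hatMk A (y ∘ x) (hy.comp hx) a' = hatMk A id Function.injective_id a := by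
      rw [← h3]; exact hp2
    obtain ⟨e, he, hm⟩ := hat_exact A h4
    have hys : Function.Surjective y := fun j =>
      ⟨x (e.symm j), by simpa using (he (e.symm j)).symm⟩
    refine ⟨B.map y hys b, ?_⟩
    rw [← hq]
    exact Quot.sound ⟨Equiv.ofBijective y ⟨hy, hys⟩, fun i => rfl, rfl⟩
  choose τ hτ using keyC
  have hspec : HatTransSpec A B τ ψ := by
    intro X n x hx a
    have h1 : FA (Fin n) X x (hatMk A id Function.injective_id a) = hatMk A x hx a := by
      rw [hFA (Fin n) X x n n id Function.injective_id a id Function.surjective_id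
        x hx (fun i => rfl), A.map_id]
    have h2 : FB (Fin n) X x (hatMk B id Function.injective_id (τ n a))
        = hatMk B x hx (τ n a) := by
      rw [hFB (Fin n) X x n n id Function.injective_id (τ n a) id
        Function.surjective_id x hx (fun i => rfl), B.map_id]
    calc ψ X (hatMk A x hx a)
        = ψ X (FA (Fin n) X x (hatMk A id Function.injective_id a)) := by rw [h1]
      _ = FB (Fin n) X x (ψ (Fin n) (hatMk A id Function.injective_id a)) :=
          (hnat _ _ _ _).symm
      _ = hatMk B x hx (τ n a) := by rw [hτ, h2]
  have hnatτ : SNatTrans A B τ := by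
    intro n m f hf a
    have h1 : FA (Fin n) (Fin m) f (hatMk A id Function.injective_id a)
        = hatMk A id Function.injective_id (A.map f hf a) :=
      hFA (Fin n) (Fin m) f n m id Function.injective_id a f hf id
        Function.injective_id (fun i => rfl)
    have h2 : FB (Fin n) (Fin m) f (hatMk B id Function.injective_id (τ n a))
        = hatMk B id Function.injective_id (B.map f hf (τ n a)) :=
      hFB (Fin n) (Fin m) f n m id Function.injective_id (τ n a) f hf id
        Function.injective_id (fun i => rfl)
    have h := hnat (Fin n) (Fin m) f (hatMk A id Function.injective_id a)
    rw [hτ n a, h2, h1, hτ m (A.map f hf a)] at h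
    exact (hatMk_id_inj B h).symm
  refine ⟨τ, ⟨hnatτ, hspec⟩, ?_⟩
  rintro τ' ⟨-, hspec'⟩
  funext n a
  exact hatMk_id_inj B ((hspec' (Fin n) n id Function.injective_id a).symm.trans (hτ n a))
end

section
/- Every finitary endofunctor F of Set that preserves pullbacks along monomorphisms is isomorphic to Â for some functor A : S → Set; namely, taking A(n) = F(Fin n) minus the union of the images F(f)(A(Fin m)) over all proper injections f : Fin m → Fin n with m < n, with A(α) = F(α) restricted to A(n) for surjections α, the map τ_X([x⃗, a]) = F(x⃗)(a) is a natural isomorphism Â ≅ F. -/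
/-- The coefficients of a finitary endofunctor `F`: `A(n)` is `F(Fin n)` minus the
union of the images `F(f)(A(Fin m))` over all proper injections `f : Fin m → Fin n`, `m < n`. -/
def Acoef (F : Type → Type) (Fmap : ∀ (X Y : Type), (X → Y) → F X → F Y) :
    (n : ℕ) → Set (F (Fin n)) :=
  fun n => {y | ∀ m : ℕ, m < n → ∀ f : Fin m → Fin n, Function.Injective f →
    ∀ z ∈ Acoef F Fmap m, Fmap (Fin m) (Fin n) f z ≠ y}
termination_by n => n

section Helpers

variable (F : Type → Type) (Fmap : ∀ (X Y : Type), (X → Y) → F X → F Y)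

lemma acoef_spec {n : ℕ} {y : F (Fin n)} (h : y ∈ Acoef F Fmap n) :
    ∀ m : ℕ, m < n → ∀ f : Fin m → Fin n, Function.Injective f →
      ∀ z ∈ Acoef F Fmap m, Fmap (Fin m) (Fin n) f z ≠ y := by
  rw [Acoef] at h; exact h

lemma acoef_not_mem {n : ℕ} {y : F (Fin n)} (h : y ∉ Acoef F Fmap n) :
    ∃ m : ℕ, m < n ∧ ∃ f : Fin m → Fin n, Function.Injective f ∧
      ∃ z ∈ Acoef F Fmap m, Fmap (Fin m) (Fin n) f z = y := by
  rw [Acoef, Set.mem_setOf_eq] at h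
  push_neg at h
  obtain ⟨m, hm, f, hf, z, hz, hfz⟩ := h
  exact ⟨m, hm, f, hf, z, hz, hfz⟩

lemma acoef_factor (Fmap_id : ∀ (X : Type) (v : F X), Fmap X X id v = v)
    (n : ℕ) (v : F (Fin n)) :
    ∃ (m : ℕ) (g : Fin m → Fin n), Function.Injective g ∧
      ∃ a ∈ Acoef F Fmap m, Fmap (Fin m) (Fin n) g a = v := by
  by_cases h : v ∈ Acoef F Fmap n
  · exact ⟨n, id, Function.injective_id, v, h, Fmap_id _ v⟩
  · obtain ⟨m, _, f, hf, z, hz, hfz⟩ := acoef_not_mem F Fmap h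
    exact ⟨m, f, hf, z, hz, hfz⟩

lemma acoef_key (Fmap_id : ∀ (X : Type) (v : F X), Fmap X X id v = v)
    (Fmap_comp : ∀ (X Y Z : Type) (f : X → Y) (g : Y → Z) (v : F X),
      Fmap Y Z g (Fmap X Y f v) = Fmap X Z (g ∘ f) v)
    {n p : ℕ} {a : F (Fin n)} (ha : a ∈ Acoef F Fmap n)
    (g : Fin p → Fin n) (hg : Function.Injective g)
    (w : F (Fin p)) (hw : Fmap (Fin p) (Fin n) g w = a) : n ≤ p := by
  by_contra hlt
  push_neg at hlt
  obtain ⟨q, h', hh', b, hb, hhb⟩ := acoef_factor F Fmap Fmap_id p w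
  have hq : q ≤ p := by
    have := Fintype.card_le_of_injective h' hh'
    simpa using this
  refine acoef_spec F Fmap ha q (lt_of_le_of_lt hq hlt) (g ∘ h') (hg.comp hh') b hb ?_
  rw [← Fmap_comp, hhb, hw]

lemma factor_inj (X : Type) (n : ℕ) (x : Fin n → X) :
    ∃ (p : ℕ) (σ : Fin n → Fin p) (y : Fin p → X),
      Function.Injective y ∧ ∀ i, y (σ i) = x i := by
  classical
  haveI : Finite (Set.range x) := (Set.finite_range x).to_subtype
  haveI : Fintype (Set.range x) := Fintype.ofFinite _
  let e := Fintype.equivFin (Set.range x)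
  refine ⟨Fintype.card (Set.range x), fun i => e ⟨x i, Set.mem_range_self i⟩,
    fun j => (e.symm j).1, ?_, ?_⟩
  · intro j j' h
    have := Subtype.ext h (p := fun t => t ∈ Set.range x)
    exact e.symm.injective this
  · intro i
    simp [e]

lemma pull_lemma
    (Fmap_comp : ∀ (X Y Z : Type) (f : X → Y) (g : Y → Z) (v : F X),
      Fmap Y Z g (Fmap X Y f v) = Fmap X Z (g ∘ f) v)
    (hpb : ∀ (P Y Z X : Type) (p1 : P → Y) (p2 : P → Z) (f : Y → X) (g : Z → X),
      IsSetPullback p1 p2 f g → Function.Injective g →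
      IsSetPullback (Fmap P Y p1) (Fmap P Z p2) (Fmap Y X f) (Fmap Z X g))
    (X : Type) (n m : ℕ) (u : Fin n → X) (v : Fin m → X)
    (hv : Function.Injective v) (a : F (Fin n)) (a' : F (Fin m))
    (heq : Fmap (Fin n) X u a = Fmap (Fin m) X v a') :
    ∃ (p : ℕ) (g : Fin p → Fin n) (h : Fin p → Fin m) (w : F (Fin p)),
      Function.Injective g ∧ (∀ j, u (g j) = v (h j)) ∧
      Fmap (Fin p) (Fin n) g w = a ∧ Fmap (Fin p) (Fin m) h w = a' ∧
      (Function.Injective u → Function.Injective h) := by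
  classical
  set P := {q : Fin n × Fin m // u q.1 = v q.2} with hP
  have pb : IsSetPullback (fun q : P => q.1.1) (fun q : P => q.1.2) u v := by
    constructor
    · exact fun q => q.2
    · intro i j h
      refine ⟨⟨(i, j), h⟩, ⟨rfl, rfl⟩, ?_⟩
      rintro ⟨⟨i', j'⟩, hq⟩ ⟨h1, h2⟩
      simp only at h1 h2
      subst h1; subst h2; rfl
  have Fpb := hpb P (Fin n) (Fin m) X _ _ u v pb hv
  obtain ⟨w0, ⟨hw1, hw2⟩, -⟩ := Fpb.2 a a' heq
  haveI : Fintype P := Fintype.ofFinite _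
  let eF := Fintype.equivFin P
  refine ⟨Fintype.card P, fun j => (eF.symm j).1.1, fun j => (eF.symm j).1.2,
    Fmap P (Fin (Fintype.card P)) eF w0, ?_, ?_, ?_, ?_, ?_⟩
  · intro j j' h
    have h' : (eF.symm j).1.1 = (eF.symm j').1.1 := h
    have h2 : v (eF.symm j).1.2 = v (eF.symm j').1.2 := by
      rw [← (eF.symm j).2, ← (eF.symm j').2, h']
    have h2' := hv h2
    apply eF.symm.injective
    exact Subtype.ext (Prod.ext h' h2')
  · exact fun j => (eF.symm j).2
  · rw [Fmap_comp]
    have : ((fun j => (eF.symm j).1.1) ∘ ⇑eF) = fun q : P => q.1.1 := by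
      funext q; simp
    rw [this, hw1]
  · rw [Fmap_comp]
    have : ((fun j => (eF.symm j).1.2) ∘ ⇑eF) = fun q : P => q.1.2 := by
      funext q; simp
    rw [this, hw2]
  · intro hu j j' h
    have h' : (eF.symm j).1.2 = (eF.symm j').1.2 := h
    have h1 : u (eF.symm j).1.1 = u (eF.symm j').1.1 := by
      rw [(eF.symm j).2, (eF.symm j').2, h']
    have h1' := hu h1
    apply eF.symm.injective
    exact Subtype.ext (Prod.ext h1' h')

end Helpers

/-- Every finitary endofunctor of `Set` preserving pullbacks along
monomorphisms is isomorphic to `Â` where `A(n) ⊆ F(Fin n)` consists of the elements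
not in the image of any proper injection, with `A(α) = F(α)` restricted; the
isomorphism is `τ_X([x⃗,a]) = F(x⃗)(a)`. Concretely: `A` is closed under the action
of surjections, the action commutes with `F`, and `τ_X` is onto and injective up to
the identification defining the tensor `[X over n] ⊗_{S_n} A(n)`. -/
theorem finitary_semianalytic_is_hat
    (F : Type → Type) (Fmap : ∀ (X Y : Type), (X → Y) → F X → F Y)
    (Fmap_id : ∀ (X : Type) (v : F X), Fmap X X id v = v)
    (Fmap_comp : ∀ (X Y Z : Type) (f : X → Y) (g : Y → Z) (v : F X),
      Fmap Y Z g (Fmap X Y f v) = Fmap X Z (g ∘ f) v)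
    (hfin : ∀ (X : Type) (v : F X), ∃ (n : ℕ) (x : Fin n → X) (w : F (Fin n)),
      Fmap (Fin n) X x w = v)
    (hpb : ∀ (P Y Z X : Type) (p1 : P → Y) (p2 : P → Z) (f : Y → X) (g : Z → X),
      IsSetPullback p1 p2 f g → Function.Injective g →
      IsSetPullback (Fmap P Y p1) (Fmap P Z p2) (Fmap Y X f) (Fmap Z X g)) :
    -- `A` is closed under the action of surjections (so `A(α) := F(α)` restricted
    -- makes `A` a functor on `S`)
    (∀ (n m : ℕ) (α : Fin n → Fin m), Function.Surjective α →
      ∀ y ∈ Acoef F Fmap n, Fmap (Fin n) (Fin m) α y ∈ Acoef F Fmap m) ∧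
    -- `τ_X([x⃗,a]) = F(x⃗)(a)` is onto
    (∀ (X : Type) (v : F X), ∃ (n : ℕ) (x : Fin n → X) (a : F (Fin n)),
      Function.Injective x ∧ a ∈ Acoef F Fmap n ∧ Fmap (Fin n) X x a = v) ∧
    -- `τ_X` is injective up to the simultaneous action of bijections, i.e. it
    -- induces a bijection `Â(X) ≅ F(X)`
    (∀ (X : Type) (n m : ℕ) (x : Fin n → X) (x' : Fin m → X)
      (_ : Function.Injective x) (_ : Function.Injective x')
      (a : F (Fin n)) (a' : F (Fin m)),
      a ∈ Acoef F Fmap n → a' ∈ Acoef F Fmap m →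
      Fmap (Fin n) X x a = Fmap (Fin m) X x' a' →
      ∃ e : Fin n ≃ Fin m, (∀ i, x' (e i) = x i) ∧
        Fmap (Fin n) (Fin m) e a = a') := by
  refine ⟨?_, ?_, ?_⟩
  · -- closure under surjections
    intro n m α hα y hy
    by_contra hcon
    obtain ⟨k, hk, f, hf, z, hz, hfz⟩ := acoef_not_mem F Fmap hcon
    obtain ⟨p, g, h, w, hg, hcomm, hgw, hhw, -⟩ :=
      pull_lemma F Fmap Fmap_comp hpb (Fin m) n k α f hf y z hfz.symm
    -- p = n
    have hnp : n ≤ p := acoef_key F Fmap Fmap_id Fmap_comp hy g hg w hgw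
    have hpn : p ≤ n := by
      have := Fintype.card_le_of_injective g hg
      simpa using this
    have hpe : p = n := le_antisymm hpn hnp
    have hgbij : Function.Bijective g := by
      rw [Fintype.bijective_iff_injective_and_card]
      simp [hg, hpe]
    -- f is surjective, hence bijective, so k = m, contradiction with k < m
    have hfsurj : Function.Surjective f := by
      intro j
      obtain ⟨i, hi⟩ := hα j
      obtain ⟨j', hj'⟩ := hgbij.2 i
      exact ⟨h j', by rw [← hcomm j', hj', hi]⟩
    have : k = m := by
      have := Fintype.card_of_bijective ⟨hf, hfsurj⟩
      simpa using this
    omega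
  · -- surjectivity of τ
    intro X v
    obtain ⟨n, x, w, hw⟩ := hfin X v
    obtain ⟨p, σ, y, hy, hyσ⟩ := factor_inj X n x
    obtain ⟨q, g, hg, a, ha, hga⟩ :=
      acoef_factor F Fmap Fmap_id p (Fmap (Fin n) (Fin p) σ w)
    refine ⟨q, y ∘ g, a, hy.comp hg, ha, ?_⟩
    have h1 : Fmap (Fin q) X (y ∘ g) a = Fmap (Fin p) X y (Fmap (Fin q) (Fin p) g a) := by
      rw [Fmap_comp]
    rw [h1, hga, Fmap_comp]
    have : (y ∘ σ) = x := funext hyσ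
    rw [this, hw]
  · -- injectivity of τ
    intro X n m x x' hx hx' a a' ha ha' heq
    obtain ⟨p, g, h, w, hg, hcomm, hgw, hhw, hhinj⟩ :=
      pull_lemma F Fmap Fmap_comp hpb X n m x x' hx' a a' heq
    have hh := hhinj hx
    have hnp : n ≤ p := acoef_key F Fmap Fmap_id Fmap_comp ha g hg w hgw
    have hmp : m ≤ p := acoef_key F Fmap Fmap_id Fmap_comp ha' h hh w hhw
    have hpn : p ≤ n := by
      have := Fintype.card_le_of_injective g hg; simpa using this
    have hpm : p ≤ m := by
      have := Fintype.card_le_of_injective h hh; simpa using this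
    have hgbij : Function.Bijective g := by
      rw [Fintype.bijective_iff_injective_and_card]
      exact ⟨hg, by simp [le_antisymm hpn hnp]⟩
    have hhbij : Function.Bijective h := by
      rw [Fintype.bijective_iff_injective_and_card]
      exact ⟨hh, by simp [le_antisymm hpm hmp]⟩
    let eg := Equiv.ofBijective g hgbij
    let eh := Equiv.ofBijective h hhbij
    refine ⟨eg.symm.trans eh, ?_, ?_⟩
    · intro i
      have hgi : g (eg.symm i) = i := eg.apply_symm_apply i
      calc x' ((eg.symm.trans eh) i) = x' (h (eg.symm i)) := rfl
        _ = x (g (eg.symm i)) := (hcomm _).symm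
        _ = x i := by rw [hgi]
    · have hE : (⇑(eg.symm.trans eh)) ∘ g = h := by
        funext j
        have : eg.symm (g j) = j := eg.symm_apply_apply j
        show eh (eg.symm (g j)) = h j
        rw [this]; rfl
      rw [← hgw, Fmap_comp, hE, hhw]
end

section
/- For n ≥ 3, the functor P_{≤n} : Set → Set sending a set to its subsets of cardinality at most n does not weakly preserve pullbacks. -/
/-- The functor `P_{≤n}` of subsets with at most `n` elements. -/
def PLE (n : ℕ) (X : Type) : Type := {S : Set X // S.Finite ∧ S.ncard ≤ n}

/-- The action of `P_{≤n}` on functions, by direct image. -/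
def PLEmap (n : ℕ) {X Y : Type} (f : X → Y) : PLE n X → PLE n Y :=
  fun S => ⟨f '' S.1, S.2.1.image f,
    le_trans (Set.ncard_image_le S.2.1) S.2.2⟩

/-- For `n ≥ 3`, the functor `P_{≤n}` does not weakly preserve
pullbacks. -/
theorem PLE_not_weakly_preserve_pullbacks (n : ℕ) (hn : 3 ≤ n) :
    ¬ (∀ (P Y Z X : Type) (p1 : P → Y) (p2 : P → Z) (f : Y → X) (g : Z → X),
        IsSetPullback p1 p2 f g →
        IsWeakSetPullback (PLEmap n p1) (PLEmap n p2) (PLEmap n f) (PLEmap n g)) := by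
  intro H
  have hn0 : 0 < n := by omega
  have hn1 : n - 1 < n := by omega
  -- notation
  set z : Fin n := ⟨0, hn0⟩ with hz
  set l : Fin n := ⟨n - 1, hn1⟩ with hl
  have hzl : z ≠ l := by
    intro h
    have := congrArg Fin.val h
    simp [hz, hl] at this
    omega
  -- the maps
  let f : Fin n → Bool := fun i => decide ((i : ℕ) = n - 1)
  let g : Fin n → Bool := fun j => decide ((j : ℕ) ≠ 0)
  let P : Type := {q : Fin n × Fin n // f q.1 = g q.2}
  let p1 : P → Fin n := fun q => q.1.1
  let p2 : P → Fin n := fun q => q.1.2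
  have hpb : IsSetPullback p1 p2 f g := by
    constructor
    · exact fun q => q.2
    · intro a b hab
      refine ⟨⟨(a, b), hab⟩, ⟨rfl, rfl⟩, ?_⟩
      rintro ⟨⟨a', b'⟩, h⟩ ⟨ha, hb⟩
      apply Subtype.ext
      simp [p1, p2] at ha hb
      simp [ha, hb]
  have hw := H P (Fin n) (Fin n) Bool p1 p2 f g hpb
  -- the two subsets: full sets
  have huniv_card : (Set.univ : Set (Fin n)).ncard = n := by
    simp [Set.ncard_univ]
  have hA : (Set.univ : Set (Fin n)).Finite ∧ (Set.univ : Set (Fin n)).ncard ≤ n := by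
    exact ⟨Set.finite_univ, le_of_eq huniv_card⟩
  let A : PLE n (Fin n) := ⟨Set.univ, hA⟩
  -- f '' univ = univ = g '' univ  (both are surjective onto Bool)
  have hfA : PLEmap n f A = PLEmap n g A := by
    apply Subtype.ext
    show f '' Set.univ = g '' Set.univ
    have hfs : f '' Set.univ = Set.univ := by
      apply Set.eq_univ_of_forall
      intro b
      cases b with
      | false => exact ⟨z, Set.mem_univ _, by simp [f, hz]; omega⟩
      | true => exact ⟨l, Set.mem_univ _, by simp [f, hl]⟩
    have hgs : g '' Set.univ = Set.univ := by
      apply Set.eq_univ_of_forall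
      intro b
      cases b with
      | false => exact ⟨z, Set.mem_univ _, by simp [g, hz]⟩
      | true => exact ⟨l, Set.mem_univ _, by simp [g, hl]; omega⟩
    rw [hfs, hgs]
  obtain ⟨S, hS1, hS2⟩ := hw.2 A A hfA
  -- extract the image facts
  have hS1' : p1 '' S.1 = Set.univ := congrArg Subtype.val hS1
  have hS2' : p2 '' S.1 = Set.univ := congrArg Subtype.val hS2
  -- split S into the part with second coordinate z and the rest
  let T1 : Set P := {q ∈ S.1 | p2 q = z}
  let T2 : Set P := {q ∈ S.1 | p2 q ≠ z}
  have hfinS : S.1.Finite := S.2.1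
  have hfinT1 : T1.Finite := hfinS.subset (fun q hq => hq.1)
  have hfinT2 : T2.Finite := hfinS.subset (fun q hq => hq.1)
  -- T1 surjects onto {l}ᶜ via p1
  have hsub1 : ({l}ᶜ : Set (Fin n)) ⊆ p1 '' T1 := by
    intro i hi
    have : i ∈ p1 '' S.1 := by rw [hS1']; trivial
    obtain ⟨q, hq, hqi⟩ := this
    have hfi : f i = false := by
      simp only [Set.mem_compl_iff, Set.mem_singleton_iff] at hi
      simp only [f, decide_eq_false_iff_not]
      intro h
      exact hi (Fin.ext (by simp [hl, h]))
    have hgq : g (p2 q) = false := by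
      have := q.2
      rw [show q.1.1 = p1 q from rfl, hqi, hfi] at this
      exact this.symm
    have hq2 : p2 q = z := by
      simp only [g, decide_eq_false_iff_not, not_not] at hgq
      exact Fin.ext (by simp [hz, hgq])
    exact ⟨q, ⟨hq, hq2⟩, hqi⟩
  -- T2 surjects onto {z}ᶜ via p2
  have hsub2 : ({z}ᶜ : Set (Fin n)) ⊆ p2 '' T2 := by
    intro j hj
    have : j ∈ p2 '' S.1 := by rw [hS2']; trivial
    obtain ⟨q, hq, hqj⟩ := this
    simp only [Set.mem_compl_iff, Set.mem_singleton_iff] at hj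
    exact ⟨q, ⟨hq, by rw [hqj]; exact hj⟩, hqj⟩
  -- compl of a singleton has ncard n - 1
  have hcompl : ∀ a : Fin n, ({a}ᶜ : Set (Fin n)).ncard = n - 1 := by
    intro a
    have : ({a}ᶜ : Set (Fin n)) = Set.univ \ {a} := (Set.compl_eq_univ_diff _)
    rw [this, Set.ncard_diff_singleton_of_mem (Set.mem_univ a), huniv_card]
  -- cardinality bounds
  have hT1 : n - 1 ≤ T1.ncard := by
    calc n - 1 = ({l}ᶜ : Set (Fin n)).ncard := (hcompl l).symm
    _ ≤ (p1 '' T1).ncard := Set.ncard_le_ncard hsub1 (hfinT1.image _)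
    _ ≤ T1.ncard := Set.ncard_image_le hfinT1
  have hT2 : n - 1 ≤ T2.ncard := by
    calc n - 1 = ({z}ᶜ : Set (Fin n)).ncard := (hcompl z).symm
    _ ≤ (p2 '' T2).ncard := Set.ncard_le_ncard hsub2 (hfinT2.image _)
    _ ≤ T2.ncard := Set.ncard_image_le hfinT2
  have hdisj : Disjoint T1 T2 := by
    rw [Set.disjoint_left]
    rintro q ⟨_, h1⟩ ⟨_, h2⟩
    exact h2 h1
  have hun : T1 ∪ T2 = S.1 := by
    ext q
    constructor
    · rintro (h | h) <;> exact h.1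
    · intro h
      by_cases hc : p2 q = z
      · exact Or.inl ⟨h, hc⟩
      · exact Or.inr ⟨h, hc⟩
  have hcard : S.1.ncard = T1.ncard + T2.ncard := by
    rw [← hun, Set.ncard_union_eq hdisj hfinT1 hfinT2]
  have hle : S.1.ncard ≤ n := S.2.2
  omega
end

section
/- For a set U and n ∈ ℕ, the functor X ↦ (functions U → X whose image has at most n elements) preserves pullbacks along monomorphisms. -/
/-- The functor `(-)^U_{≤n}`, sending `X` to the set of functions `U → X` whose
image has at most `n` elements. -/
def FunLE (U : Type) (n : ℕ) (X : Type) : Type :=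
  {g : U → X // (Set.range g).Finite ∧ (Set.range g).ncard ≤ n}

/-- The action of `(-)^U_{≤n}` on functions, by postcomposition. -/
def FunLEmap (U : Type) (n : ℕ) {X Y : Type} (f : X → Y) : FunLE U n X → FunLE U n Y :=
  fun g => ⟨fun u => f (g.1 u),
    by
      have h : Set.range (fun u => f (g.1 u)) = f '' Set.range g.1 := by
        rw [← Set.range_comp]; rfl
      refine ⟨?_, ?_⟩
      · rw [h]; exact g.2.1.image f
      · rw [h]; exact le_trans (Set.ncard_image_le g.2.1) g.2.2⟩

/-- The functor `X ↦ (U → X with image of size ≤ n)` preserves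
pullbacks along monomorphisms. -/
theorem FunLE_preserves_pullbacks_along_monos (U : Type) (n : ℕ)
    {P Y Z X : Type} (p1 : P → Y) (p2 : P → Z) (f : Y → X) (g : Z → X)
    (hpb : IsSetPullback p1 p2 f g) (hmono : Function.Injective g) :
    IsSetPullback (FunLEmap U n p1) (FunLEmap U n p2) (FunLEmap U n f) (FunLEmap U n g) := by
  obtain ⟨hcomm, huniq⟩ := hpb
  have hp1inj : Function.Injective p1 := by
    intro p q h
    have h2 : p2 p = p2 q := hmono (by rw [← hcomm, ← hcomm, h])
    obtain ⟨r, _, hr⟩ := huniq (p1 p) (p2 p) (hcomm p)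
    exact (hr p ⟨rfl, rfl⟩).trans (hr q ⟨h.symm, h2.symm⟩).symm
  constructor
  · intro p
    apply Subtype.ext
    funext u
    exact hcomm (p.1 u)
  · intro a b hab
    have hab' : ∀ u, f (a.1 u) = g (b.1 u) := fun u => congrFun (congrArg Subtype.val hab) u
    choose c hc1 hc2 using fun u => (huniq (a.1 u) (b.1 u) (hab' u)).exists
    have himg : p1 '' Set.range c ⊆ Set.range a.1 := by
      rintro _ ⟨_, ⟨u, rfl⟩, rfl⟩; exact ⟨u, (hc1 u).symm⟩
    have hfin : (Set.range c).Finite := by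
      have := a.2.1.subset himg
      exact Set.Finite.of_finite_image this (hp1inj.injOn)
    have hcard : (Set.range c).ncard ≤ n := by
      have h1 : (p1 '' Set.range c).ncard = (Set.range c).ncard :=
        Set.ncard_image_of_injective _ hp1inj
      have h2 : (p1 '' Set.range c).ncard ≤ (Set.range a.1).ncard :=
        Set.ncard_le_ncard himg a.2.1
      have := a.2.2; omega
    refine ⟨⟨c, hfin, hcard⟩, ⟨Subtype.ext (funext hc1), Subtype.ext (funext hc2)⟩, ?_⟩
    rintro ⟨d, hd⟩ ⟨hda, hdb⟩
    apply Subtype.ext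
    funext u
    have h1 : p1 (d u) = a.1 u := congrFun (congrArg Subtype.val hda) u
    have h2 : p2 (d u) = b.1 u := congrFun (congrArg Subtype.val hdb) u
    obtain ⟨r, _, hr⟩ := huniq (a.1 u) (b.1 u) (hab' u)
    exact (hr _ ⟨h1, h2⟩).trans (hr _ ⟨hc1 u, hc2 u⟩).symm
end

section
/- In the Lawvere theory P_f(O) associated to a regular operad O, every isomorphism n → n is represented by a unique span (φ, ⟨1_n, a_1,…,a_n⟩) where φ : Fin n → Fin n is a bijection and each a_i ∈ O_1 is invertible (i.e., there is b_i ∈ O_1 with a_i ∗ b_i = ι = b_i ∗ a_i). -/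
/-- The lexicographic bijection `(Σ i, Fin (n i)) ≃ Fin (∑ i, n i)`. -/
noncomputable def finSigmaEquiv {m : ℕ} (n : Fin m → ℕ) : (Σ i, Fin (n i)) ≃ Fin (∑ i, n i) :=
  toLex.trans (monoEquivOfFin (Lex (Σ i, Fin (n i))) (by simp [Fintype.card_sigma])).symm.toEquiv

/-- A regular operad: a family of sets of operations with a unit, an associative
multiplication, and a compatible left action of surjections of finite sets. -/
structure RegularOperad where
  ops : ℕ → Type
  unit : ops 1
  act : ∀ {n m : ℕ} (φ : Fin n → Fin m), Function.Surjective φ → ops n → ops m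
  comp : ∀ {k N : ℕ} (n : Fin k → ℕ), (∑ i, n i) = N → (∀ i, ops (n i)) → ops k → ops N
  act_id : ∀ {n : ℕ} (a : ops n), act id Function.surjective_id a = a
  act_act : ∀ {n m l : ℕ} (φ : Fin n → Fin m) (hφ : Function.Surjective φ)
      (ψ : Fin m → Fin l) (hψ : Function.Surjective ψ) (a : ops n),
      act ψ hψ (act φ hφ a) = act (ψ ∘ φ) (hψ.comp hφ) a
  comp_unit : ∀ {k : ℕ} (a : ops k),
      comp (fun _ : Fin k => 1) (by simp) (fun _ => unit) a = a
  unit_comp : ∀ {n : ℕ} (a : ops n),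
      comp (fun _ : Fin 1 => n) (by simp) (fun _ => a) unit = a
  assoc : ∀ {k N M : ℕ} (n : Fin k → ℕ) (hN : (∑ i, n i) = N)
      (m : Fin N → ℕ) (hM : (∑ j, m j) = M)
      (c : ∀ j, ops (m j)) (b : ∀ i, ops (n i)) (a : ops k)
      (hsum : (∑ i, ∑ j : Fin (n i), m (Fin.cast hN (finSigmaEquiv n ⟨i, j⟩))) = M),
      comp m hM c (comp n hN b a) =
      comp (fun i => ∑ j : Fin (n i), m (Fin.cast hN (finSigmaEquiv n ⟨i, j⟩))) hsum
        (fun i => comp (fun j : Fin (n i) => m (Fin.cast hN (finSigmaEquiv n ⟨i, j⟩))) rfl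
          (fun j => c (Fin.cast hN (finSigmaEquiv n ⟨i, j⟩))) (b i)) a

/-- A span representing a morphism `n → m` in the Lawvere theory `P_f(O)`:
for each `i < m` a block of inputs of size `r i` carrying an operation `op i`,
together with an amalgamation map to `Fin n` which is injective on each block. -/
structure SpanRep (ops : ℕ → Type) (n m : ℕ) where
  r : Fin m → ℕ
  amal : (Σ i : Fin m, Fin (r i)) → Fin n
  fiber_inj : ∀ i : Fin m, Function.Injective (fun j : Fin (r i) => amal ⟨i, j⟩)
  op : ∀ i, ops (r i)

/-- The equivalence identifying spans which differ by fiberwise permutations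
acting simultaneously on the amalgamation and the operations. -/
def SpanEquiv (O : RegularOperad) {n m : ℕ} (s t : SpanRep O.ops n m) : Prop :=
  ∃ σ : ∀ i, Fin (s.r i) ≃ Fin (t.r i),
    (∀ i j, s.amal ⟨i, j⟩ = t.amal ⟨i, σ i j⟩) ∧
    (∀ i, O.act (σ i) (σ i).surjective (s.op i) = t.op i)

/-- `u` represents the composite of the spans `s : n → m` and `t : m → k`
(in diagrammatic order): it is obtained from the pullback-composite by
regularization along blockwise surjections `α j`. -/
noncomputable def CompSpec (O : RegularOperad) {n m k : ℕ}
    (s : SpanRep O.ops n m) (t : SpanRep O.ops m k) (u : SpanRep O.ops n k) : Prop :=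
  ∃ (α : ∀ j : Fin k,
      Fin (∑ l : Fin (t.r j), s.r (t.amal ⟨j, l⟩)) → Fin (u.r j))
    (hα : ∀ j, Function.Surjective (α j)),
    (∀ (j : Fin k) (x : Fin (∑ l : Fin (t.r j), s.r (t.amal ⟨j, l⟩))),
      u.amal ⟨j, α j x⟩ =
        s.amal ⟨t.amal ⟨j, ((finSigmaEquiv _).symm x).1⟩, ((finSigmaEquiv _).symm x).2⟩) ∧
    (∀ j : Fin k,
      u.op j = O.act (α j) (hα j)
        (O.comp (fun l : Fin (t.r j) => s.r (t.amal ⟨j, l⟩)) rfl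
          (fun l => s.op (t.amal ⟨j, l⟩)) (t.op j)))

/-- The identity span on `n`. -/
def idSpan (O : RegularOperad) (n : ℕ) : SpanRep O.ops n n where
  r := fun _ => 1
  amal := fun p => p.1
  fiber_inj := fun _ a b _ => Subsingleton.elim a b
  op := fun _ => O.unit

/-- An invertible unary operation of a regular operad. -/
def IsInvertibleUnary (O : RegularOperad) (a : O.ops 1) : Prop :=
  ∃ b : O.ops 1,
    O.comp (fun _ : Fin 1 => 1) (by simp) (fun _ => b) a = O.unit ∧
    O.comp (fun _ : Fin 1 => 1) (by simp) (fun _ => a) b = O.unit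

/-! If `t` is a two-sided inverse of `s`, each block `j` of the composite `s ; t ≃ id` is
nonempty and all its inputs are amalgamated to `j`: `s.amal ⟨t.amal ⟨j, l⟩, p⟩ = j`. So `s.amal`
is onto and the blocks of `t` are nonempty; for `i = s.amal ⟨j, l⟩`, the other composite maps the
block `i` of `t` injectively onto the single point `j`, so it has size one. Once all blocks have
size one, the operation identities of the two composites read `b ∗ a = ι` and `a ∗ b = ι`, and the
fiberwise permutations relating equivalent spans are all trivial. -/

namespace RegularOperad

variable (O : RegularOperad)

/-- `O.comp₁ b a` plugs `b` into the single input of `a`. -/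
def comp₁ (b a : O.ops 1) : O.ops 1 :=
  O.comp (fun _ : Fin 1 => 1) (by simp) (fun _ => b) a

theorem act_heq_of_eq_one {N M : ℕ} (hN : N = 1) (hM : M = 1) (φ : Fin N → Fin M)
    (hφ : Function.Surjective φ) (a : O.ops N) : HEq (O.act φ hφ a) a := by
  subst hN hM
  obtain rfl : φ = id := Subsingleton.elim _ _
  exact heq_of_eq (O.act_id a)

theorem comp_heq_comp₁ {k N : ℕ} (hk : k = 1) (n : Fin k → ℕ) (hn : ∀ i, n i = 1)
    (hN : ∑ i, n i = N) (b : ∀ i, O.ops (n i)) (a : O.ops k) (i : Fin k) :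
    HEq (O.comp n hN b a)
      (O.comp₁ (cast (congrArg O.ops (hn i)) (b i)) (cast (congrArg O.ops hk) a)) := by
  subst hk
  obtain rfl : n = fun _ => 1 := funext hn
  obtain rfl : N = 1 := by simpa using hN.symm
  obtain rfl : i = 0 := Subsingleton.elim _ _
  refine heq_of_eq ?_
  simp only [cast_eq, comp₁]
  congr 1
  funext j
  rw [Subsingleton.elim j 0]

end RegularOperad

section Spans

variable {O : RegularOperad} {n m : ℕ}

theorem SpanEquiv.r_eq {s t : SpanRep O.ops n m} (h : SpanEquiv O s t) (i : Fin m) :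
    s.r i = t.r i :=
  let ⟨σ, _⟩ := h
  Fin.equiv_iff_eq.mp ⟨σ i⟩

theorem SpanEquiv.eq_of_r_le_one {s t : SpanRep O.ops n m} (h : SpanEquiv O s t)
    (hs : ∀ i, s.r i ≤ 1) : s = t := by
  have hr : s.r = t.r := funext h.r_eq
  obtain ⟨r, amal, fiber_inj, op⟩ := s
  obtain ⟨r', amal', fiber_inj', op'⟩ := t
  obtain rfl : r = r' := hr
  obtain ⟨σ, hamal, hop⟩ := h
  have hσ : ∀ i, σ i = Equiv.refl _ := fun i =>
    have : Subsingleton (Fin (r i)) := Fin.subsingleton_iff_le_one.mpr (hs i)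
    Subsingleton.elim _ _
  simp only [hσ, Equiv.coe_refl, id_eq] at hamal hop
  obtain rfl : amal = amal' := funext fun ⟨i, j⟩ => hamal i j
  obtain rfl : op = op' := funext fun i => (O.act_id _).symm.trans (hop i)
  rfl

theorem SpanEquiv.amal_eq_of_idSpan {u : SpanRep O.ops n n} (h : SpanEquiv O u (idSpan O n))
    (j : Fin n) (x : Fin (u.r j)) : u.amal ⟨j, x⟩ = j :=
  let ⟨_, hamal, _⟩ := h
  hamal j x

theorem SpanEquiv.op_heq_unit {u : SpanRep O.ops n n} (h : SpanEquiv O u (idSpan O n))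
    (j : Fin n) : HEq (u.op j) O.unit := by
  have hr := h.r_eq j
  obtain ⟨σ, -, hop⟩ := h
  exact (O.act_heq_of_eq_one hr rfl (σ j) _ _).symm.trans (heq_of_eq (hop j))

/-- `s ; t ≃ id`, composing in diagrammatic order (`s` first). -/
def CompEquivId (O : RegularOperad) (s : SpanRep O.ops n m) (t : SpanRep O.ops m n) : Prop :=
  ∃ u, CompSpec O s t u ∧ SpanEquiv O u (idSpan O n)

namespace CompEquivId

variable {s : SpanRep O.ops n m} {t : SpanRep O.ops m n}

theorem amal_amal (h : CompEquivId O s t) (j : Fin n) (l : Fin (t.r j))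
    (p : Fin (s.r (t.amal ⟨j, l⟩))) : s.amal ⟨t.amal ⟨j, l⟩, p⟩ = j := by
  obtain ⟨u, ⟨α, -, hamal, -⟩, hid⟩ := h
  have := hamal j (finSigmaEquiv _ ⟨l, p⟩)
  rw [Equiv.symm_apply_apply] at this
  rw [← this, hid.amal_eq_of_idSpan]

theorem nonempty_block (h : CompEquivId O s t) (j : Fin n) :
    Nonempty (Σ l : Fin (t.r j), Fin (s.r (t.amal ⟨j, l⟩))) := by
  obtain ⟨u, ⟨α, hα, -, -⟩, hid⟩ := h
  obtain ⟨σ, -, -⟩ := hid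
  obtain ⟨x, -⟩ := hα j ((σ j).symm (0 : Fin 1))
  exact ⟨(finSigmaEquiv _).symm x⟩

theorem r_pos (h : CompEquivId O s t) (j : Fin n) : 0 < t.r j :=
  (h.nonempty_block j).elim fun y => y.1.pos

theorem surjective_amal (h : CompEquivId O s t) : Function.Surjective s.amal := fun j =>
  (h.nonempty_block j).elim fun y => ⟨⟨t.amal ⟨j, y.1⟩, y.2⟩, h.amal_amal j y.1 y.2⟩

theorem r_le_one (h : CompEquivId O s t) (h' : CompEquivId O t s) (i : Fin n) : t.r i ≤ 1 := by
  obtain ⟨⟨j, l⟩, rfl⟩ := h.surjective_amal i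
  have : Subsingleton (Fin (t.r (s.amal ⟨j, l⟩))) :=
    ⟨fun p q => t.fiber_inj _ ((h'.amal_amal j l p).trans (h'.amal_amal j l q).symm)⟩
  exact Fin.subsingleton_iff_le_one.mp this

theorem r_eq_one (h : CompEquivId O s t) (h' : CompEquivId O t s) (i : Fin n) : t.r i = 1 :=
  le_antisymm (h.r_le_one h' i) (h.r_pos i)

theorem injective_amal (h : CompEquivId O s t) (h' : CompEquivId O t s) :
    Function.Injective s.amal := by
  rintro ⟨i, l⟩ ⟨i', l'⟩ hamal
  have hleft : ∀ i l, t.amal ⟨s.amal ⟨i, l⟩, ⟨0, h.r_pos _⟩⟩ = i := fun i l =>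
    h'.amal_amal i l _
  obtain rfl : i = i' := by rw [← hleft i l, ← hleft i' l', hamal]
  rw [s.fiber_inj i hamal]

theorem comp₁_eq_unit (h : CompEquivId O s t) {j : Fin n} (ht : t.r j = 1)
    (hs : ∀ l, s.r (t.amal ⟨j, l⟩) = 1) (l : Fin (t.r j)) :
    O.comp₁ (cast (congrArg O.ops (hs l)) (s.op (t.amal ⟨j, l⟩)))
      (cast (congrArg O.ops ht) (t.op j)) = O.unit := by
  obtain ⟨u, ⟨α, hα, -, hop⟩, hid⟩ := h
  have hN : ∑ l, s.r (t.amal ⟨j, l⟩) = 1 := by simp [hs, ht]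
  have hcomp := O.comp_heq_comp₁ ht _ hs rfl (fun l => s.op (t.amal ⟨j, l⟩)) (t.op j) l
  have hact := O.act_heq_of_eq_one hN (hid.r_eq j) (α j) (hα j)
    (O.comp _ rfl (fun l => s.op (t.amal ⟨j, l⟩)) (t.op j))
  rw [← hop j] at hact
  exact eq_of_heq (hcomp.symm.trans (hact.symm.trans (hid.op_heq_unit j)))

end CompEquivId

end Spans

/-- In the Lawvere theory `P_f(O)` of a regular operad `O`, every
isomorphism `n → n` is represented by a unique span whose blocks all have size 1,
whose amalgamation is a bijection, and whose unary operations are invertible;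
moreover this span is the unique member of its equivalence class. -/
theorem iso_span_form (O : RegularOperad) (n : ℕ) (s : SpanRep O.ops n n)
    (hiso : ∃ (t u v : SpanRep O.ops n n),
      CompSpec O s t u ∧ SpanEquiv O u (idSpan O n) ∧
      CompSpec O t s v ∧ SpanEquiv O v (idSpan O n)) :
    (∀ i, s.r i = 1) ∧
    Function.Bijective (fun p : Σ i : Fin n, Fin (s.r i) => s.amal p) ∧
    (∀ (i : Fin n) (h : s.r i = 1),
      IsInvertibleUnary O (cast (congrArg O.ops h) (s.op i))) ∧
    (∀ s' : SpanRep O.ops n n, SpanEquiv O s s' → s' = s) := by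
  obtain ⟨t, u, v, hu, hu_id, hv, hv_id⟩ := hiso
  have hst : CompEquivId O s t := ⟨u, hu, hu_id⟩
  have hts : CompEquivId O t s := ⟨v, hv, hv_id⟩
  have hs1 : ∀ i, s.r i = 1 := hts.r_eq_one hst
  have ht1 : ∀ i, t.r i = 1 := hst.r_eq_one hts
  refine ⟨hs1, ⟨hst.injective_amal hts, hst.surjective_amal⟩, fun i hi => ?_,
    fun s' hs' => (hs'.eq_of_r_le_one fun i => (hs1 i).le).symm⟩
  let j := s.amal ⟨i, ⟨0, by omega⟩⟩
  refine ⟨cast (congrArg O.ops (ht1 j)) (t.op j), hts.comp₁_eq_unit hi (fun _ => ht1 _) _, ?_⟩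
  have h := hst.comp₁_eq_unit (ht1 j) (fun _ => hs1 _) ⟨0, by simp [ht1]⟩
  rwa [hts.amal_amal] at h
end
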